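/- arXiv:1401.8087 — 9 statements merged into one kernel-verified Lean document; each statement's English description precedes it below -/
import Mathlib

section
/- With Q stochastic satisfying the symmetric structure condition, Γ skew-symmetric with Γ(x,y) ≥ −π(y)Q(y,x), π everywhere positive, define A_Γ(x,y) = min(1, R_Γ(x,y)) with R_Γ the non-reversible Hastings ratio, and P_Γ(x,y) = Q(x,y)A_Γ(x,y) for x ≠ y, with P_Γ(x,x) = Q(x,x) + ∑_{z≠x} Q(x,z)(1 − A_Γ(x,z)). Then π(x)P_Γ(x,y) − π(y)P_Γ(y,x) = Γ(x,y) for all x,y ∈ S. -/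
open scoped Classical

/-!
On an edge `x ≠ y` with `a = π x * Q x y > 0` and `b = π y * Q y x > 0`, the two probability
flows are `a * min 1 ((Γ + b) / a) = min a (Γ + b)` and `min b (a - Γ)`, and
`min a (Γ + b) = Γ + min (a - Γ) b`. Where `Q` vanishes on an edge, the lower bound on `Γ`
in both directions together with skew-symmetry forces `Γ = 0`.
-/

lemma mul_min_one_div {a c : ℝ} (ha : 0 < a) : a * min 1 (c / a) = min a c := by
  rw [mul_min_of_nonneg _ _ ha.le, mul_one, mul_div_cancel₀ _ ha.ne']

lemma mul_min_one_div_sub_mul_min_one_div {a b g : ℝ} (ha : 0 < a) (hb : 0 < b) :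
    a * min 1 ((g + b) / a) - b * min 1 ((-g + a) / b) = g := by
  have hshift : min a (g + b) = min b (-g + a) + g := by
    rw [min_comm, ← min_add_add_right]
    congr 1 <;> ring
  rw [mul_min_one_div ha, mul_min_one_div hb, hshift, add_sub_cancel_left]

lemma eq_zero_of_skew_of_neg_le {S : Type*} {Q Γ : S → S → ℝ} {π : S → ℝ}
    (hΓskew : ∀ x y, Γ x y = -Γ y x) (hbound : ∀ x y, Γ x y ≥ -(π y * Q y x))
    {x y : S} (hxy : Q x y = 0) (hyx : Q y x = 0) : Γ x y = 0 := by
  have h₁ := hbound x y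
  have h₂ := hbound y x
  rw [hyx, mul_zero, neg_zero] at h₁
  rw [hxy, mul_zero, neg_zero] at h₂
  linarith [hΓskew x y]

theorem nrmh_chain_has_vorticity_Gamma_general
    (S : Type*)
    (Q : S → S → ℝ) (Γ : S → S → ℝ) (π : S → ℝ)
    (hQnonneg : ∀ x y, 0 ≤ Q x y)
    (hsym : ∀ x y, Q x y = 0 → Q y x = 0)
    (hΓskew : ∀ x y, Γ x y = - Γ y x)
    (hπpos : ∀ x, 0 < π x)
    (hbound : ∀ x y, Γ x y ≥ - (π y * Q y x))
    (R A P : S → S → ℝ)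
    (hR : ∀ x y, R x y =
      if π x * Q x y = 0 then 1 else (Γ x y + π y * Q y x) / (π x * Q x y))
    (hA : ∀ x y, A x y = min 1 (R x y))
    (hPoff : ∀ x y, x ≠ y → P x y = Q x y * A x y) :
    ∀ x y, π x * P x y - π y * P y x = Γ x y := by
  intro x y
  rcases eq_or_ne x y with rfl | hxy
  · linarith [hΓskew x x]
  rw [hPoff x y hxy, hPoff y x hxy.symm]
  by_cases hQ : Q x y = 0
  · have hQ' := hsym x y hQ
    rw [hQ, hQ', eq_zero_of_skew_of_neg_le hΓskew hbound hQ hQ']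
    ring
  have hQ' : Q y x ≠ 0 := fun h ↦ hQ (hsym y x h)
  have ha : 0 < π x * Q x y := mul_pos (hπpos x) ((hQnonneg x y).lt_of_ne' hQ)
  have hb : 0 < π y * Q y x := mul_pos (hπpos y) ((hQnonneg y x).lt_of_ne' hQ')
  rw [hA, hA, hR, hR, if_neg ha.ne', if_neg hb.ne', hΓskew y x, ← mul_assoc, ← mul_assoc]
  exact mul_min_one_div_sub_mul_min_one_div ha hb

/-- the chain P_Γ produced by non-reversible Metropolis–Hastings has
vorticity Γ, i.e. π(x)P_Γ(x,y) − π(y)P_Γ(y,x) = Γ(x,y) for all x, y. -/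
theorem nrmh_chain_has_vorticity_Gamma
    (S : Type*) [Fintype S]
    (Q : S → S → ℝ) (Γ : S → S → ℝ) (π : S → ℝ)
    (hQnonneg : ∀ x y, 0 ≤ Q x y)
    (hQrow : ∀ x, ∑ y, Q x y = 1)
    (hsym : ∀ x y, Q x y = 0 → Q y x = 0)
    (hΓskew : ∀ x y, Γ x y = - Γ y x)
    (hπpos : ∀ x, 0 < π x)
    (hbound : ∀ x y, Γ x y ≥ - (π y * Q y x))
    (R A P : S → S → ℝ)
    (hR : ∀ x y, R x y =
      if π x * Q x y = 0 then 1 else (Γ x y + π y * Q y x) / (π x * Q x y))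
    (hA : ∀ x y, A x y = min 1 (R x y))
    (hPoff : ∀ x y, x ≠ y → P x y = Q x y * A x y)
    (hPdiag : ∀ x, P x x = Q x x + ∑ z ∈ Finset.univ.erase x, Q x z * (1 - A x z)) :
    ∀ x y, π x * P x y - π y * P y x = Γ x y :=
  nrmh_chain_has_vorticity_Gamma_general S Q Γ π hQnonneg hsym hΓskew hπpos hbound R A P hR hA hPoff
end

section
/- Under the assumptions of the non-reversible Metropolis–Hastings construction (Q stochastic with symmetric structure, Γ skew-symmetric with row sums zero, Γ(x,y) ≥ −π(y)Q(y,x), π everywhere positive and summable), the transition matrix P_Γ defined via the non-reversible Hastings ratio has π as an invariant distribution. -/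
open scoped Classical

lemma nrmh_min_sub (a b g : ℝ) : min a (g + b) - min b (a - g) = g := by
  rcases le_total a (g + b) with h | h
  · rw [min_eq_left h, min_eq_right (by linarith)]; ring
  · rw [min_eq_right h, min_eq_left (by linarith)]; ring

/-- under the NRMH assumptions (symmetric structure, skew-symmetric Γ
with zero row sums, compatibility bound, positive summable π), the NRMH transition
matrix P_Γ has π as an invariant distribution. -/
theorem nrmh_invariant_distribution
    (S : Type*) [Fintype S]
    (Q : S → S → ℝ) (Γ : S → S → ℝ) (π : S → ℝ)
    (hQnonneg : ∀ x y, 0 ≤ Q x y)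
    (hQrow : ∀ x, ∑ y, Q x y = 1)
    (hsym : ∀ x y, Q x y = 0 → Q y x = 0)
    (hΓskew : ∀ x y, Γ x y = - Γ y x)
    (hΓrow : ∀ x, ∑ y, Γ x y = 0)
    (hπpos : ∀ x, 0 < π x)
    (hbound : ∀ x y, Γ x y ≥ - (π y * Q y x))
    (R A P : S → S → ℝ)
    (hR : ∀ x y, R x y =
      if π x * Q x y = 0 then 1 else (Γ x y + π y * Q y x) / (π x * Q x y))
    (hA : ∀ x y, A x y = min 1 (R x y))
    (hPoff : ∀ x y, x ≠ y → P x y = Q x y * A x y)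
    (hPdiag : ∀ x, P x x = Q x x + ∑ z ∈ Finset.univ.erase x, Q x z * (1 - A x z)) :
    ∀ y, ∑ x, π x * P x y = π y := by
  intro y
  -- flow identity
  have key : ∀ x z, π x * Q x z * A x z
      = min (π x * Q x z) (Γ x z + π z * Q z x) := by
    intro x z
    have hb : (0:ℝ) ≤ Γ x z + π z * Q z x := by have := hbound x z; linarith
    rw [hA, hR]
    by_cases h : π x * Q x z = 0
    · rw [if_pos h, h, min_self, mul_one]
      exact (min_eq_left hb).symm
    · have hpos : 0 < π x * Q x z :=
        lt_of_le_of_ne (mul_nonneg (hπpos x).le (hQnonneg x z)) (Ne.symm h)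
      rw [if_neg h, mul_min_of_nonneg _ _ hpos.le, mul_one, mul_div_cancel₀ _ h]
  have hΓdiag : Γ y y = 0 := by have := hΓskew y y; linarith
  have hΓcol : ∑ x, Γ x y = 0 := by
    have h1 : ∑ x, Γ x y = ∑ x, -Γ y x :=
      Finset.sum_congr rfl fun x _ => hΓskew x y
    rw [h1, Finset.sum_neg_distrib, hΓrow, neg_zero]
  have hΓcol' : ∑ x ∈ Finset.univ.erase y, Γ x y = 0 := by
    have h2 := Finset.sum_erase_add Finset.univ (fun x => Γ x y) (Finset.mem_univ y)
    simp only [hΓdiag, add_zero] at h2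
    rw [h2, hΓcol]
  have hQrow' : Q y y + ∑ z ∈ Finset.univ.erase y, Q y z = 1 := by
    have h3 := Finset.sum_erase_add Finset.univ (fun z => Q y z) (Finset.mem_univ y)
    rw [hQrow] at h3; linarith
  have hsplit := Finset.sum_erase_add Finset.univ (fun x => π x * P x y) (Finset.mem_univ y)
  have hdiag : π y * P y y
      = π y * Q y y + ∑ z ∈ Finset.univ.erase y, π y * (Q y z * (1 - A y z)) := by
    rw [hPdiag, mul_add, Finset.mul_sum]
  have hoff : ∑ x ∈ Finset.univ.erase y, π x * P x y
      = ∑ x ∈ Finset.univ.erase y, π x * Q x y * A x y := by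
    refine Finset.sum_congr rfl fun x hx => ?_
    rw [hPoff x y (Finset.ne_of_mem_erase hx), mul_assoc]
  have hterm : ∀ x ∈ Finset.univ.erase y,
      π x * Q x y * A x y + π y * (Q y x * (1 - A y x))
        = π y * Q y x + Γ x y := by
    intro x _
    have k1 := key x y
    have k2' : π y * Q y x * A y x
        = min (π y * Q y x) (π x * Q x y - Γ x y) := by
      rw [key y x, hΓskew y x]; congr 1; ring
    have hm := nrmh_min_sub (π x * Q x y) (π y * Q y x) (Γ x y)
    have e : π y * (Q y x * (1 - A y x))
        = π y * Q y x - π y * Q y x * A y x := by ring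
    rw [e, k1, k2']
    linarith [hm]
  calc ∑ x, π x * P x y
      = ∑ x ∈ Finset.univ.erase y, π x * P x y + π y * P y y := hsplit.symm
    _ = π y * Q y y + ∑ x ∈ Finset.univ.erase y,
          (π x * Q x y * A x y + π y * (Q y x * (1 - A y x))) := by
        rw [hoff, hdiag, Finset.sum_add_distrib]; ring
    _ = π y * Q y y + ∑ x ∈ Finset.univ.erase y, (π y * Q y x + Γ x y) := by
        rw [Finset.sum_congr rfl hterm]
    _ = π y := by
        rw [Finset.sum_add_distrib, hΓcol', ← Finset.mul_sum]
        linear_combination π y * hQrow'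
end

section
/- Let Q and H be irreducible stochastic kernels on a countable space S related by Q(x,y) = H(x,y) + Γ(x,y)/(2π(x)), both satisfying the symmetric structure condition, with Γ skew-symmetric and Γ(x,y) ≥ −π(y)Q(y,x). Let P₁ be the NRMH kernel with proposal Q and vorticity Γ, and let P₂(x,y) = K(x,y) + Γ(x,y)/(2π(x)), where K is the classical Metropolis–Hastings kernel with proposal H and target π. Then P₁(x,y) = P₂(x,y) for all x ≠ y with Q(x,y) ≠ 0; in fact π(x)P₁(x,y) = min(π(x)H(x,y), π(y)H(y,x)) + Γ(x,y)/2. -/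
open scoped Classical

/-! Multiplying a Metropolis–Hastings-type transition by `π x` turns `Q x y * min 1 R` into the
flux `min (π x Q x y) (π x Q x y R)`. Since `π x Q x y = π x H x y + Γ x y / 2` and, by skew-symmetry,
`Γ x y + π y Q y x = π y H y x + Γ x y / 2`, the NRMH flux is the classical MH flux of `H`
shifted by `Γ x y / 2`, which is also the flux of `K + Γ / (2π)`. -/

theorem mul_min_one_div_of_pos {a b : ℝ} (ha : 0 < a) : a * min 1 (b / a) = min a b := by
  rw [mul_min_of_nonneg _ _ ha.le, mul_one, mul_div_cancel₀ _ ha.ne']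

/-- The convention `R = 1` when `a = 0` is harmless as long as `b` vanishes with `a`. -/
theorem mul_min_one_ite_div {a b : ℝ} (ha : 0 ≤ a) (hb : a = 0 → b = 0) :
    a * min 1 (if a = 0 then 1 else b / a) = min a b := by
  rcases ha.eq_or_lt with rfl | hpos
  · simp [hb rfl]
  · rw [if_neg hpos.ne', mul_min_one_div_of_pos hpos]

theorem mul_add_div_two_mul {p h g : ℝ} (hp : p ≠ 0) :
    p * (h + g / (2 * p)) = p * h + g / 2 := by
  field_simp

theorem nrmh_equals_additive_construction_general
    (S : Type*)
    (Q H : S → S → ℝ) (Γ : S → S → ℝ) (π : S → ℝ)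
    (hQnonneg : ∀ x y, 0 ≤ Q x y)
    (hHnonneg : ∀ x y, 0 ≤ H x y)
    (hHsym : ∀ x y, H x y = 0 → H y x = 0)
    (hΓskew : ∀ x y, Γ x y = - Γ y x)
    (hπpos : ∀ x, 0 < π x)
    (hrel : ∀ x y, Q x y = H x y + Γ x y / (2 * π x))
    (RΓ K P₁ P₂ : S → S → ℝ)
    (hRΓ : ∀ x y, RΓ x y =
      if π x * Q x y = 0 then 1 else (Γ x y + π y * Q y x) / (π x * Q x y))
    (hP₁ : ∀ x y, x ≠ y → P₁ x y = Q x y * min 1 (RΓ x y))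
    (hK : ∀ x y, x ≠ y → K x y =
      H x y * min 1 (if π x * H x y = 0 then 1
        else (π y * H y x) / (π x * H x y)))
    (hP₂ : ∀ x y, x ≠ y → P₂ x y = K x y + Γ x y / (2 * π x)) :
    ∀ x y, x ≠ y → Q x y ≠ 0 →
      π x * P₁ x y = min (π x * H x y) (π y * H y x) + Γ x y / 2 ∧
      P₁ x y = P₂ x y := by
  intro x y hxy hQ
  have hπx := (hπpos x).ne'
  have hfluxQ : π x * Q x y ≠ 0 := mul_ne_zero hπx hQ
  have hP₁flux : π x * P₁ x y = min (π x * Q x y) (Γ x y + π y * Q y x) := by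
    rw [hP₁ x y hxy, hRΓ, ← mul_assoc]
    exact mul_min_one_ite_div (mul_nonneg (hπpos x).le (hQnonneg x y)) (absurd · hfluxQ)
  have hKflux : π x * K x y = min (π x * H x y) (π y * H y x) := by
    rw [hK x y hxy, ← mul_assoc]
    refine mul_min_one_ite_div (mul_nonneg (hπpos x).le (hHnonneg x y)) fun h => ?_
    rw [hHsym x y ((mul_eq_zero.mp h).resolve_left hπx), mul_zero]
  have hQH : π x * Q x y = π x * H x y + Γ x y / 2 := by
    rw [hrel, mul_add_div_two_mul hπx]
  have hQH' : π y * Q y x = π y * H y x + Γ y x / 2 := by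
    rw [hrel, mul_add_div_two_mul (hπpos y).ne']
  have hP₁H : π x * P₁ x y = min (π x * H x y) (π y * H y x) + Γ x y / 2 := by
    rw [hP₁flux, hQH, hQH', hΓskew y x, ← min_add_add_right]
    congr 1
    ring
  refine ⟨hP₁H, mul_left_cancel₀ hπx ?_⟩
  rw [hP₁H, hP₂ x y hxy, mul_add_div_two_mul hπx, hKflux]

/-- equivalence of NRMH (proposal Q = H + Γ/(2π)) and the additive
construction P₂ = K + Γ/(2π) with K the classical MH kernel for proposal H. -/
theorem nrmh_equals_additive_construction
    (S : Type*) [Countable S]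
    (Q H : S → S → ℝ) (Γ : S → S → ℝ) (π : S → ℝ)
    (hQnonneg : ∀ x y, 0 ≤ Q x y) (hQrow : ∀ x, ∑' y, Q x y = 1)
    (hHnonneg : ∀ x y, 0 ≤ H x y) (hHrow : ∀ x, ∑' y, H x y = 1)
    (hQirr : ∀ x y, Relation.ReflTransGen (fun a b => 0 < Q a b) x y)
    (hHirr : ∀ x y, Relation.ReflTransGen (fun a b => 0 < H a b) x y)
    (hQsym : ∀ x y, Q x y = 0 → Q y x = 0)
    (hHsym : ∀ x y, H x y = 0 → H y x = 0)
    (hΓskew : ∀ x y, Γ x y = - Γ y x)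
    (hπpos : ∀ x, 0 < π x)
    (hrel : ∀ x y, Q x y = H x y + Γ x y / (2 * π x))
    (hbound : ∀ x y, Γ x y ≥ - (π y * Q y x))
    (RΓ K P₁ P₂ : S → S → ℝ)
    (hRΓ : ∀ x y, RΓ x y =
      if π x * Q x y = 0 then 1 else (Γ x y + π y * Q y x) / (π x * Q x y))
    (hP₁ : ∀ x y, x ≠ y → P₁ x y = Q x y * min 1 (RΓ x y))
    (hK : ∀ x y, x ≠ y → K x y =
      H x y * min 1 (if π x * H x y = 0 then 1
        else (π y * H y x) / (π x * H x y)))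
    (hP₂ : ∀ x y, x ≠ y → P₂ x y = K x y + Γ x y / (2 * π x)) :
    ∀ x y, x ≠ y → Q x y ≠ 0 →
      π x * P₁ x y = min (π x * H x y) (π y * H y x) + Γ x y / 2 ∧
      P₁ x y = P₂ x y :=
  nrmh_equals_additive_construction_general S Q H Γ π hQnonneg hHnonneg hHsym hΓskew hπpos hrel RΓ K
    P₁ P₂ hRΓ hP₁ hK hP₂
end

section
/- Let V ∈ ℝ^{n×n} be symmetric positive definite, S ∈ ℝ^{n×n} skew-symmetric, and B = −(I+S)V^{−1}. If 0 < h < 2/‖V^{−1/2}(I−S²)V^{−1/2}‖ (operator norm), then the spectral radius of I + hB is strictly less than 1. -/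
open Matrix
open scoped Matrix.Norms.L2Operator

/-!
Conjugation by `W` turns `1 + h B = 1 - h (1 + S) W W` into `1 - h C` with `C = W (1 + S) W`, so
every eigenvalue of `1 + h B` is `1 - h λ` for an eigenvalue `λ` of `C`. If `C z = λ z` and
`y = W z`, then `λ ‖z‖² = ⟪y, (1 + S) y⟫`. Skewness of `S` makes `⟪y, S y⟫` imaginary, so
`Re λ ‖z‖² = ‖y‖² > 0`, while Cauchy–Schwarz gives `|λ| ‖z‖² ≤ ‖y‖ ‖(1 + S) W‖ ‖z‖`. By the
C*-identity `‖(1 + S) W‖² = ‖W (1 - S²) W‖ =: m`, hence `|λ|² ≤ m Re λ` and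
`|1 - h λ|² ≤ 1 - h Re λ (2 - h m) < 1`.
-/

theorem Complex.norm_one_sub_mul_lt_one {μ : ℂ} {c h : ℝ} (hμ : 0 < μ.re)
    (hμc : ‖μ‖ ^ 2 ≤ c * μ.re) (hh0 : 0 < h) (hhc : h * c < 2) : ‖1 - h * μ‖ < 1 := by
  have hsq : ‖1 - h * μ‖ ^ 2 = 1 - 2 * h * μ.re + h ^ 2 * ‖μ‖ ^ 2 := by
    simp only [Complex.sq_norm, Complex.normSq_apply, Complex.sub_re, Complex.sub_im,
      Complex.mul_re, Complex.mul_im, Complex.ofReal_re, Complex.ofReal_im, Complex.one_re,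
      Complex.one_im]
    ring
  have hlt : ‖1 - h * μ‖ ^ 2 < 1 := by
    rw [hsq]
    nlinarith [mul_le_mul_of_nonneg_left hμc (sq_nonneg h), mul_pos hh0 hμ]
  exact (pow_lt_one_iff_of_nonneg (norm_nonneg _) two_ne_zero).mp hlt

theorem spectrum.exists_eq_one_sub_smul {𝕜 A : Type*} [Field 𝕜] [Ring A] [Algebra 𝕜 A] {a : A}
    {t μ : 𝕜} (ht : t ≠ 0) (hμ : μ ∈ spectrum 𝕜 (1 - t • a)) :
    ∃ ν ∈ spectrum 𝕜 a, μ = 1 - t * ν := by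
  refine ⟨(1 - μ) / t, ?_, by field_simp; ring⟩
  let u : 𝕜ˣ := Units.mk0 (-t) (neg_ne_zero.mpr ht)
  rw [← spectrum.smul_mem_smul_iff (r := u), ← spectrum.add_mem_add_iff (s := 1)]
  convert hμ using 2
  · simp [u, sub_eq_add_neg]
  · simp [u]
    field_simp
    ring

theorem spectralRadius_lt_one_of_forall_norm_lt_one {A : Type*} [NormedRing A]
    [NormedAlgebra ℂ A] [CompleteSpace A] {a : A} (h : ∀ μ ∈ spectrum ℂ a, ‖μ‖ < 1) :
    spectralRadius ℂ a < 1 := by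
  rcases subsingleton_or_nontrivial A with hA | hA
  · simp [spectralRadius, spectrum.of_subsingleton]
  · exact_mod_cast spectrum.spectralRadius_lt_of_forall_lt a (r := 1)
      fun μ hμ => by exact_mod_cast h μ hμ

namespace ContinuousLinearMap

theorem exists_apply_eq_smul_of_mem_spectrum {𝕜 E : Type*} [NontriviallyNormedField 𝕜]
    [CompleteSpace 𝕜] [NormedAddCommGroup E] [NormedSpace 𝕜 E] [FiniteDimensional 𝕜 E]
    {T : E →L[𝕜] E} {μ : 𝕜} (hμ : μ ∈ spectrum 𝕜 T) : ∃ z ≠ 0, T z = μ • z := by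
  rw [← AlgEquiv.spectrum_eq (Module.End.toContinuousLinearMap E).symm] at hμ
  obtain ⟨z, hz⟩ := (Module.End.hasEigenvalue_iff_mem_spectrum.mpr hμ).exists_hasEigenvector
  exact ⟨z, hz.2, hz.apply_eq_smul⟩

section SkewPerturbation

variable {E : Type*} [NormedAddCommGroup E] [InnerProductSpace ℂ E] [CompleteSpace E]

theorem re_inner_apply_self_eq_zero_of_star_eq_neg {S : E →L[ℂ] E} (hS : star S = -S) (y : E) :
    (inner ℂ y (S y)).re = 0 := by
  have h : inner ℂ y (S y) = -starRingEnd ℂ (inner ℂ y (S y)) := by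
    rw [inner_conj_symm, ← adjoint_inner_right, ← star_eq_adjoint, hS, _root_.neg_apply,
      inner_neg_right, neg_neg]
  have hre := congrArg Complex.re h
  rw [Complex.neg_re, Complex.conj_re] at hre
  linarith

theorem star_one_add_mul_self_of_star_eq_neg {S G : E →L[ℂ] E} (hS : star S = -S) :
    star ((1 + S) * G) * ((1 + S) * G) = star G * (1 - S * S) * G := by
  rw [star_mul, star_add, star_one, hS]
  noncomm_ring

variable {G S : E →L[ℂ] E} {z : E} {μ : ℂ}

theorem inner_eq_mul_norm_sq_of_apply_eq_smul (h : (star G * (1 + S) * G) z = μ • z) :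
    inner ℂ (G z) ((1 + S) (G z)) = μ * ‖z‖ ^ 2 := by
  rw [← adjoint_inner_right, ← star_eq_adjoint]
  change inner ℂ z ((star G * (1 + S) * G) z) = _
  rw [h, inner_smul_right, inner_self_eq_norm_sq_to_K]
  norm_cast

theorem re_mul_norm_sq_eq_of_apply_eq_smul (hS : star S = -S)
    (h : (star G * (1 + S) * G) z = μ • z) : μ.re * ‖z‖ ^ 2 = ‖G z‖ ^ 2 := by
  have hre := congrArg Complex.re (inner_eq_mul_norm_sq_of_apply_eq_smul h)
  rw [show (1 + S) (G z) = G z + S (G z) from rfl, inner_add_right, Complex.add_re,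
    re_inner_apply_self_eq_zero_of_star_eq_neg hS, inner_self_eq_norm_sq_to_K] at hre
  norm_cast at hre
  simpa [Complex.mul_re, ← Complex.ofReal_pow] using hre.symm

theorem norm_mul_norm_sq_le_of_apply_eq_smul (h : (star G * (1 + S) * G) z = μ • z) :
    ‖μ‖ * ‖z‖ ^ 2 ≤ ‖G z‖ * (‖(1 + S) * G‖ * ‖z‖) :=
  calc ‖μ‖ * ‖z‖ ^ 2 = ‖inner ℂ (G z) ((1 + S) (G z))‖ := by
        rw [inner_eq_mul_norm_sq_of_apply_eq_smul h, norm_mul, norm_pow, Complex.norm_real,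
          norm_norm]
    _ ≤ ‖G z‖ * ‖((1 + S) * G) z‖ := norm_inner_le_norm _ _
    _ ≤ ‖G z‖ * (‖(1 + S) * G‖ * ‖z‖) := by gcongr; exact le_opNorm _ _

theorem norm_sq_le_mul_re_of_apply_eq_smul (hS : star S = -S) (hz : z ≠ 0)
    (h : (star G * (1 + S) * G) z = μ • z) : ‖μ‖ ^ 2 ≤ ‖(1 + S) * G‖ ^ 2 * μ.re := by
  have hre := re_mul_norm_sq_eq_of_apply_eq_smul hS h
  have hle := pow_le_pow_left₀ (by positivity) (norm_mul_norm_sq_le_of_apply_eq_smul h) 2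
  have hz4 : 0 < ‖z‖ ^ 4 := pow_pos (norm_pos_iff.mpr hz) 4
  refine le_of_mul_le_mul_right ?_ hz4
  calc ‖μ‖ ^ 2 * ‖z‖ ^ 4 = (‖μ‖ * ‖z‖ ^ 2) ^ 2 := by ring
    _ ≤ (‖G z‖ * (‖(1 + S) * G‖ * ‖z‖)) ^ 2 := hle
    _ = ‖(1 + S) * G‖ ^ 2 * μ.re * ‖z‖ ^ 4 := by rw [mul_pow, ← hre]; ring

theorem re_pos_of_apply_eq_smul (hS : star S = -S) (hG : Function.Injective G) (hz : z ≠ 0)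
    (h : (star G * (1 + S) * G) z = μ • z) : 0 < μ.re := by
  have hGz : 0 < ‖G z‖ := norm_pos_iff.mpr ((map_ne_zero_iff G hG).mpr hz)
  have hpos : 0 < μ.re * ‖z‖ ^ 2 := re_mul_norm_sq_eq_of_apply_eq_smul hS h ▸ pow_pos hGz 2
  exact pos_of_mul_pos_left hpos (sq_nonneg _)

end SkewPerturbation

theorem spectralRadius_one_sub_smul_lt_one {E : Type*} [NormedAddCommGroup E]
    [InnerProductSpace ℂ E] [FiniteDimensional ℂ E] {W S : E →L[ℂ] E} (hW : IsSelfAdjoint W)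
    (hWu : IsUnit W) (hS : star S = -S) {h : ℝ} (hh0 : 0 < h)
    (hh : h * ‖W * (1 - S * S) * W‖ < 2) :
    spectralRadius ℂ (1 - (h : ℂ) • ((1 + S) * W * W)) < 1 := by
  have hconj : (1 + S) * W * W = ↑hWu.unit⁻¹ * (star W * (1 + S) * W) * ↑hWu.unit := by
    simp [hW.star_eq, ← mul_assoc]
  have hinj : Function.Injective W :=
    Function.LeftInverse.injective (g := ↑hWu.unit⁻¹) fun x => by
      change (↑hWu.unit⁻¹ * W : E →L[ℂ] E) x = x
      rw [IsUnit.val_inv_mul, one_apply_eq_self]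
  have hnorm : ‖W * (1 - S * S) * W‖ = ‖(1 + S) * W‖ ^ 2 := by
    rw [sq, ← CStarRing.norm_star_mul_self, star_one_add_mul_self_of_star_eq_neg hS, hW.star_eq]
  refine spectralRadius_lt_one_of_forall_norm_lt_one fun μ hμ => ?_
  obtain ⟨ν, hν, rfl⟩ := spectrum.exists_eq_one_sub_smul (by exact_mod_cast hh0.ne') hμ
  rw [hconj, spectrum.units_conjugate'] at hν
  obtain ⟨z, hz, hνz⟩ := exists_apply_eq_smul_of_mem_spectrum hν
  exact Complex.norm_one_sub_mul_lt_one (re_pos_of_apply_eq_smul hS hinj hz hνz)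
    (norm_sq_le_mul_re_of_apply_eq_smul hS hz hνz) hh0 (hnorm ▸ hh)

end ContinuousLinearMap

theorem EuclideanSpace.norm_sq_eq_norm_sq_re_add_norm_sq_im {n : Type*} [Fintype n]
    (x : EuclideanSpace ℂ n) :
    ‖x‖ ^ 2 = ‖(WithLp.toLp 2 fun i => (x i).re : EuclideanSpace ℝ n)‖ ^ 2
      + ‖(WithLp.toLp 2 fun i => (x i).im : EuclideanSpace ℝ n)‖ ^ 2 := by
  simp only [EuclideanSpace.norm_sq_eq, ← Finset.sum_add_distrib]
  refine Finset.sum_congr rfl fun i _ => ?_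
  rw [Complex.sq_norm, Complex.normSq_apply, Real.norm_eq_abs, Real.norm_eq_abs, sq_abs, sq_abs]
  ring

namespace Matrix

theorem re_map_ofReal_mulVec {m n : Type*} [Fintype n] (M : Matrix m n ℝ) (v : n → ℂ) (i : m) :
    ((M.map ((↑) : ℝ → ℂ) *ᵥ v) i).re = (M *ᵥ fun j => (v j).re) i := by
  simp [mulVec, dotProduct, Complex.re_sum]

theorem im_map_ofReal_mulVec {m n : Type*} [Fintype n] (M : Matrix m n ℝ) (v : n → ℂ) (i : m) :
    ((M.map ((↑) : ℝ → ℂ) *ᵥ v) i).im = (M *ᵥ fun j => (v j).im) i := by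
  simp [mulVec, dotProduct, Complex.im_sum]

theorem l2_opNorm_map_ofReal_le {m n : Type*} [Fintype m] [Fintype n] [DecidableEq n]
    (M : Matrix m n ℝ) : ‖M.map ((↑) : ℝ → ℂ)‖ ≤ ‖M‖ := by
  rw [l2_opNorm_def]
  refine ContinuousLinearMap.opNorm_le_bound _ (norm_nonneg _) fun x => ?_
  refine le_of_pow_le_pow_left₀ two_ne_zero (by positivity) ?_
  rw [EuclideanSpace.norm_sq_eq_norm_sq_re_add_norm_sq_im, mul_pow,
    EuclideanSpace.norm_sq_eq_norm_sq_re_add_norm_sq_im x]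
  simp only [LinearEquiv.trans_apply, LinearMap.coe_toContinuousLinearMap', toLpLin_apply,
    re_map_ofReal_mulVec, im_map_ofReal_mulVec]
  have hre : ‖(WithLp.toLp 2 (M *ᵥ fun j => (x j).re) : EuclideanSpace ℝ m)‖
      ≤ ‖M‖ * ‖(WithLp.toLp 2 fun j => (x j).re : EuclideanSpace ℝ n)‖ :=
    M.l2_opNorm_mulVec (WithLp.toLp 2 fun j => (x j).re)
  have him : ‖(WithLp.toLp 2 (M *ᵥ fun j => (x j).im) : EuclideanSpace ℝ m)‖
      ≤ ‖M‖ * ‖(WithLp.toLp 2 fun j => (x j).im : EuclideanSpace ℝ n)‖ :=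
    M.l2_opNorm_mulVec (WithLp.toLp 2 fun j => (x j).im)
  have hsum := add_le_add (pow_le_pow_left₀ (norm_nonneg _) hre 2)
    (pow_le_pow_left₀ (norm_nonneg _) him 2)
  rwa [mul_pow, mul_pow, ← mul_add] at hsum

theorem spectralRadius_one_sub_smul_lt_one {ι : Type*} [Fintype ι] [DecidableEq ι]
    {W S : Matrix ι ι ℂ} (hW : W.IsHermitian) (hWu : IsUnit W) (hS : Sᴴ = -S) {h : ℝ}
    (hh0 : 0 < h) (hh : h * ‖W * (1 - S * S) * W‖ < 2) :
    spectralRadius ℂ (1 - (h : ℂ) • ((1 + S) * W * W)) < 1 := by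
  let φ := toEuclideanCLM (n := ι) (𝕜 := ℂ)
  have hρ : spectralRadius ℂ (1 - (h : ℂ) • ((1 + S) * W * W))
      = spectralRadius ℂ (1 - (h : ℂ) • ((1 + φ S) * φ W * φ W)) := by
    simp only [spectralRadius, ← AlgEquiv.spectrum_eq φ, map_sub, map_one, map_smul, map_mul,
      map_add]
  rw [hρ]
  refine ContinuousLinearMap.spectralRadius_one_sub_smul_lt_one (hW.isSelfAdjoint.map φ)
    (hWu.map φ) ?_ hh0 ?_
  · rw [← map_star, star_eq_conjTranspose, hS, map_neg]
  · simpa only [cstar_norm_def, map_sub, map_one, map_mul] using hh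

end Matrix

theorem spectral_radius_lt_one_general
    (n : ℕ) (V S B : Matrix (Fin n) (Fin n) ℝ)
    (hSskew : Sᵀ = -S)
    (hB : B = -((1 + S) * V⁻¹))
    (W : Matrix (Fin n) (Fin n) ℝ) (hW : W.PosDef) (hWsq : W * W = V⁻¹)
    (h : ℝ) (hh0 : 0 < h) (hh : h < 2 / ‖W * (1 - S * S) * W‖) :
    spectralRadius ℂ ((1 + h • B).map (Complex.ofReal)) < 1 := by
  -- complexification, packaged as an `ℝ`-algebra hom so that the `map_*` lemmas apply to it
  obtain ⟨c, hc⟩ : ∃ c : Matrix (Fin n) (Fin n) ℝ →ₐ[ℝ] Matrix (Fin n) (Fin n) ℂ,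
      ∀ M, M.map Complex.ofReal = c M := ⟨(Algebra.ofId ℝ ℂ).mapMatrix, fun _ => rfl⟩
  have hM : 0 < ‖W * (1 - S * S) * W‖ := (norm_nonneg _).lt_of_ne fun h0 => by
    rw [← h0, div_zero] at hh
    linarith
  have hA : c (1 + h • B) = 1 - (h : ℂ) • ((1 + c S) * c W * c W) := by
    rw [hB, ← hWsq, Complex.coe_smul]
    simp only [map_add, map_one, map_smul, map_neg, map_mul, smul_neg, mul_assoc, sub_eq_add_neg]
  rw [hc, hA]
  refine Matrix.spectralRadius_one_sub_smul_lt_one ?_ (hW.isUnit.map c) ?_ hh0 ?_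
  · rw [← hc]
    exact hW.isHermitian.map _ fun x => by simp
  · rw [← hc, ← conjTranspose_map _ fun x => by simp, conjTranspose_eq_transpose_of_trivial,
      hSskew, Matrix.map_neg _ Complex.ofReal_neg]
  · calc h * ‖c W * (1 - c S * c S) * c W‖
          = h * ‖(W * (1 - S * S) * W).map Complex.ofReal‖ := by
          rw [hc, map_mul, map_mul, map_sub, map_one, map_mul]
      _ ≤ h * ‖W * (1 - S * S) * W‖ := by gcongr; exact l2_opNorm_map_ofReal_le _
      _ < 2 := (lt_div_iff₀ hM).mp hh

/-- for V symmetric positive definite, S skew-symmetric,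
B = −(I+S)V⁻¹ and 0 < h < 2/‖V^{−1/2}(I−S²)V^{−1/2}‖ (Euclidean operator norm,
with W = V^{−1/2} the positive definite square root of V⁻¹), the spectral radius
of I + hB is strictly less than 1. -/
theorem spectral_radius_lt_one
    (n : ℕ) (V S B : Matrix (Fin n) (Fin n) ℝ)
    (hV : V.PosDef) (hVsym : Vᵀ = V) (hSskew : Sᵀ = -S)
    (hB : B = -((1 + S) * V⁻¹))
    (W : Matrix (Fin n) (Fin n) ℝ) (hW : W.PosDef) (hWsq : W * W = V⁻¹)
    (h : ℝ) (hh0 : 0 < h) (hh : h < 2 / ‖W * (1 - S * S) * W‖) :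
    spectralRadius ℂ ((1 + h • B).map (Complex.ofReal)) < 1 :=
  spectral_radius_lt_one_general n V S B hSskew hB W hW hWsq h hh0 hh
end

section
/- Let V be symmetric positive definite, S skew-symmetric, B = −(I+S)V^{−1}, and suppose R is a positive definite matrix solving the discrete Lyapunov equation R = 2hσ²I + (I+hB)R(I+hB'). Then the block matrix M = [[R, R(I+hB')],[(I+hB)R, R]] satisfies det M = (2hσ²)ⁿ det R. -/
open Matrix

/-- for R positive definite solving the discrete Lyapunov equation
R = 2hσ²I + (I+hB)R(I+hB)ᵀ, the block matrix M = [[R, R(I+hB)ᵀ],[(I+hB)R, R]]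
satisfies det M = (2hσ²)ⁿ det R. -/
theorem block_matrix_det
    (n : ℕ) (V S B R : Matrix (Fin n) (Fin n) ℝ)
    (hV : V.PosDef) (hVsym : Vᵀ = V) (hSskew : Sᵀ = -S)
    (hB : B = -((1 + S) * V⁻¹))
    (h σ : ℝ) (hh : 0 < h) (hσ : 0 < σ)
    (hR : R.PosDef)
    (hLyap : R = (2 * h * σ ^ 2) • (1 : Matrix (Fin n) (Fin n) ℝ)
        + (1 + h • B) * R * (1 + h • B)ᵀ)
    (M : Matrix (Fin n ⊕ Fin n) (Fin n ⊕ Fin n) ℝ)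
    (hM : M = Matrix.fromBlocks R (R * (1 + h • B)ᵀ) ((1 + h • B) * R) R) :
    M.det = (2 * h * σ ^ 2) ^ n * R.det := by
  have : Invertible R := hR.isUnit.invertible
  rw [hM, det_fromBlocks₁₁]
  have hschur : R - (1 + h • B) * R * ⅟R * (R * (1 + h • B)ᵀ)
      = (2 * h * σ ^ 2) • (1 : Matrix (Fin n) (Fin n) ℝ) := by
    have : (1 + h • B) * R * ⅟R * (R * (1 + h • B)ᵀ)
        = (1 + h • B) * R * (1 + h • B)ᵀ := by
      rw [Matrix.mul_assoc ((1 + h • B) * R), ← Matrix.mul_assoc (⅟R),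
        invOf_mul_self, Matrix.one_mul]
    rw [this]
    nth_rewrite 1 [hLyap]
    ring_nf
    abel
  rw [hschur, det_smul, det_one, mul_one, Fintype.card_fin, mul_comm]
end

section
/- Let V be symmetric positive definite, S skew-symmetric, B = −(I+S)V^{−1}, h > 0, σ > 0, and suppose the spectral radius of I + hB is less than 1. Let R be the unique positive definite solution of R = 2hσ²I + (I+hB)R(I+hB'). Then R ⪰ σ²V in the Loewner order. -/
/-!
With `A = 1 + h • B`, the identity `B * V + V * Bᵀ = -2` turns the discrete Lyapunov
equation for `R` into the Stein equation `D = A * D * Aᵀ + (h ^ 2 * σ ^ 2) • (B * V * Bᵀ)`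
for `D = R - σ ^ 2 • V`, whose inhomogeneous term is positive semidefinite. Iterating it,
`D - A ^ N * D * (A ^ N)ᵀ` is positive semidefinite for every `N`, and `A ^ N → 0` by
Gelfand's formula since the spectral radius of `A` is below one; so `D` is a limit of
positive semidefinite matrices.
-/

open Matrix Filter Topology

theorem tendsto_pow_atTop_nhds_zero_of_spectralRadius_lt_one {A : Type*} [NormedRing A]
    [NormedAlgebra ℂ A] [CompleteSpace A] {a : A} (ha : spectralRadius ℂ a < 1) :
    Tendsto (a ^ ·) atTop (𝓝 0) := by
  obtain ⟨r, hρr, hr1⟩ := ENNReal.lt_iff_exists_nnreal_btwn.mp ha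
  have hgelfand := spectrum.pow_nnnorm_pow_one_div_tendsto_nhds_spectralRadius a
  have hbound : ∀ᶠ N : ℕ in atTop, ‖a ^ N‖ ≤ (r : ℝ) ^ N := by
    filter_upwards [hgelfand.eventually_lt_const hρr, eventually_gt_atTop 0] with N hN hN0
    rw [one_div, ENNReal.rpow_inv_lt_iff (by positivity), ENNReal.rpow_natCast] at hN
    exact_mod_cast hN.le
  exact squeeze_zero_norm' hbound
    (tendsto_pow_atTop_nhds_zero_of_lt_one r.coe_nonneg (by exact_mod_cast hr1))

namespace Matrix

theorem tendsto_pow_atTop_nhds_zero_of_spectralRadius_map_ofReal_lt_one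
    {n : Type*} [Fintype n] [DecidableEq n] {A : Matrix n n ℝ}
    (hA : spectralRadius ℂ (A.map Complex.ofReal) < 1) :
    Tendsto (A ^ ·) atTop (𝓝 0) := by
  -- Any Banach algebra norm will do: this one induces the entrywise topology.
  let := Matrix.linftyOpNormedRing (n := n) (α := ℂ)
  let := Matrix.linftyOpNormedAlgebra (n := n) (R := ℂ) (α := ℂ)
  have hpow (N : ℕ) : A.map Complex.ofReal ^ N = (A ^ N).map Complex.ofReal :=
    (map_pow Complex.ofRealHom.mapMatrix A N).symm
  have hC := tendsto_pow_atTop_nhds_zero_of_spectralRadius_lt_one hA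
  have hre : Continuous fun M : Matrix n n ℂ => M.map Complex.re :=
    continuous_id.matrix_map Complex.continuous_re
  simpa [hpow, Function.comp_def, Matrix.map_map] using
    (hre.tendsto 0).comp hC

section PosSemidef

variable {n R : Type*} [Fintype n] [Ring R] [PartialOrder R] [StarRing R]

theorem PosSemidef.sub_pow_mul_mul_conjTranspose_pow [DecidableEq n] [AddLeftMono R]
    {A X Q : Matrix n n R} (hQ : Q.PosSemidef) (hX : X = A * X * Aᴴ + Q) (N : ℕ) :
    (X - A ^ N * X * (A ^ N)ᴴ).PosSemidef := by
  induction N with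
  | zero => simpa using PosSemidef.zero
  | succ N ih =>
    have hstep : X - A ^ (N + 1) * X * (A ^ (N + 1))ᴴ
        = Q + A * (X - A ^ N * X * (A ^ N)ᴴ) * Aᴴ := by
      conv_lhs => enter [1]; rw [hX]
      rw [pow_succ', conjTranspose_mul]
      simp only [Matrix.mul_sub, Matrix.sub_mul, Matrix.mul_assoc]
      abel
    rw [hstep]
    exact hQ.add (ih.mul_mul_conjTranspose_same A)

variable [TopologicalSpace R] [IsTopologicalRing R] [ContinuousStar R] [OrderClosedTopology R]

theorem isClosed_setOf_posSemidef : IsClosed {M : Matrix n n R | M.PosSemidef} := by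
  simp_rw [posSemidef_iff_dotProduct_mulVec, Set.ofPred_and, Set.ofPred_forall]
  exact (isClosed_eq continuous_id.matrix_conjTranspose continuous_id).inter
    (isClosed_iInter fun x => isClosed_le continuous_const
      (continuous_const.dotProduct (continuous_id.matrix_mulVec continuous_const)))

theorem PosSemidef.of_eq_mul_mul_conjTranspose_add [DecidableEq n] [AddLeftMono R]
    {A X Q : Matrix n n R} (hA : Tendsto (A ^ ·) atTop (𝓝 0)) (hQ : Q.PosSemidef)
    (hX : X = A * X * Aᴴ + Q) : X.PosSemidef := by
  have hlim : Tendsto (fun P : Matrix n n R => X - P * X * Pᴴ) (𝓝 0) (𝓝 X) := by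
    simpa using (by fun_prop : Continuous fun P : Matrix n n R => X - P * X * Pᴴ).tendsto 0
  exact isClosed_setOf_posSemidef.mem_of_tendsto (hlim.comp hA)
    (Eventually.of_forall (hQ.sub_pow_mul_mul_conjTranspose_pow hX))

end PosSemidef

section Lyapunov

variable {n K : Type*} [Fintype n] [DecidableEq n] [CommRing K]

theorem mul_add_mul_transpose_eq_neg_two {V S B : Matrix n n K} (hV : IsUnit V.det)
    (hVsymm : Vᵀ = V) (hS : Sᵀ = -S) (hB : B = -((1 + S) * V⁻¹)) :
    B * V + V * Bᵀ = -2 := by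
  have hBt : Bᵀ = -(V⁻¹ * (1 - S)) := by
    rw [hB, transpose_neg, transpose_mul, transpose_nonsing_inv, hVsymm, transpose_add,
      transpose_one, hS, sub_eq_add_neg]
  rw [hBt, hB, Matrix.neg_mul, Matrix.mul_neg, Matrix.mul_assoc, nonsing_inv_mul _ hV,
    ← Matrix.mul_assoc, mul_nonsing_inv _ hV, Matrix.mul_one, Matrix.one_mul, ← neg_add,
    add_add_sub_cancel, one_add_one_eq_two]

theorem sub_smul_eq_mul_mul_transpose_add_of_lyapunov {B V R : Matrix n n K} (h c : K)
    (hBV : B * V + V * Bᵀ = -2)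
    (hR : R = (2 * h * c) • (1 : Matrix n n K) + (1 + h • B) * R * (1 + h • B)ᵀ) :
    R - c • V
      = (1 + h • B) * (R - c • V) * (1 + h • B)ᵀ + (h ^ 2 * c) • (B * V * Bᵀ) := by
  have hAVA : (1 + h • B) * V * (1 + h • B)ᵀ
      = V + h • (B * V + V * Bᵀ) + h ^ 2 • (B * V * Bᵀ) := by
    simp only [transpose_add, transpose_one, transpose_smul, Matrix.add_mul, Matrix.mul_add,
      Matrix.one_mul, Matrix.mul_one, Matrix.smul_mul, Matrix.mul_smul, Matrix.mul_assoc]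
    module
  have htwo : (2 : Matrix n n K) = (2 : K) • 1 := by
    rw [two_smul, one_add_one_eq_two]
  nth_rewrite 1 [hR]
  rw [Matrix.mul_sub, Matrix.sub_mul, Matrix.mul_smul, Matrix.smul_mul, hAVA, hBV, htwo]
  module

end Lyapunov

end Matrix

theorem lyapunov_solution_lower_bound_general
    (n : ℕ) (V S B R : Matrix (Fin n) (Fin n) ℝ)
    (hV : V.PosDef) (hSskew : Sᵀ = -S)
    (hB : B = -((1 + S) * V⁻¹))
    (h σ : ℝ)
    (hspec : spectralRadius ℂ ((1 + h • B).map (Complex.ofReal)) < 1)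
    (hLyap : R = (2 * h * σ ^ 2) • (1 : Matrix (Fin n) (Fin n) ℝ)
        + (1 + h • B) * R * (1 + h • B)ᵀ) :
    (R - σ ^ 2 • V).PosSemidef := by
  have hVsymm : Vᵀ = V := (conjTranspose_eq_transpose_of_trivial V).symm.trans hV.isHermitian.eq
  have hBV : B * V + V * Bᵀ = -2 :=
    mul_add_mul_transpose_eq_neg_two (isUnit_iff_ne_zero.mpr hV.det_pos.ne') hVsymm hSskew hB
  have hQ : ((h ^ 2 * σ ^ 2) • (B * V * Bᵀ)).PosSemidef := by
    simpa only [conjTranspose_eq_transpose_of_trivial] using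
      (hV.posSemidef.mul_mul_conjTranspose_same B).smul (by positivity : 0 ≤ h ^ 2 * σ ^ 2)
  refine PosSemidef.of_eq_mul_mul_conjTranspose_add
    (tendsto_pow_atTop_nhds_zero_of_spectralRadius_map_ofReal_lt_one hspec) hQ ?_
  simpa only [conjTranspose_eq_transpose_of_trivial] using
    sub_smul_eq_mul_mul_transpose_add_of_lyapunov h (σ ^ 2) hBV hLyap

/-- if the spectral radius of I + hB is < 1 and R is the positive
definite solution of the discrete Lyapunov equation R = 2hσ²I + (I+hB)R(I+hB)ᵀ,
then R ⪰ σ²V in the Loewner order. -/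
theorem lyapunov_solution_lower_bound
    (n : ℕ) (V S B R : Matrix (Fin n) (Fin n) ℝ)
    (hV : V.PosDef) (hVsym : Vᵀ = V) (hSskew : Sᵀ = -S)
    (hB : B = -((1 + S) * V⁻¹))
    (h σ : ℝ) (hh : 0 < h) (hσ : 0 < σ)
    (hspec : spectralRadius ℂ ((1 + h • B).map (Complex.ofReal)) < 1)
    (hR : R.PosDef)
    (hLyap : R = (2 * h * σ ^ 2) • (1 : Matrix (Fin n) (Fin n) ℝ)
        + (1 + h • B) * R * (1 + h • B)ᵀ)
    (huniq : ∀ R' : Matrix (Fin n) (Fin n) ℝ, R'.PosDef →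
      R' = (2 * h * σ ^ 2) • (1 : Matrix (Fin n) (Fin n) ℝ)
        + (1 + h • B) * R' * (1 + h • B)ᵀ → R' = R) :
    (R - σ ^ 2 • V).PosSemidef :=
  lyapunov_solution_lower_bound_general n V S B R hV hSskew hB h σ hspec hLyap
end

section
/- Let V be symmetric positive definite and S skew-symmetric, B = −(I+S)V^{−1}. Then for all x ∈ ℝⁿ, ⟨x, Bx⟩_V ≤ −‖x‖_V² / ‖V‖, where ⟨x,y⟩_V = ⟨x, V^{−1}y⟩ and ‖·‖_V the induced norm, and ‖V‖ the Euclidean operator norm of V. -/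
open Matrix
open scoped Matrix.Norms.L2Operator

/-! With `y = V⁻¹ x`, `⟨x, B x⟩_V = -(|y|² + ⟨y, S y⟩) = -|y|²` by skew-symmetry of `S`, while
`‖x‖_V² = ⟨y, V y⟩ ≤ ‖V‖ |y|²` by Cauchy–Schwarz. -/

namespace Matrix

variable {m R : Type*} [Fintype m]

theorem dotProduct_mulVec_comm_of_transpose_eq [CommSemiring R] {A : Matrix m m R} (hA : Aᵀ = A)
    (x y : m → R) : x ⬝ᵥ (A *ᵥ y) = (A *ᵥ x) ⬝ᵥ y := by
  rw [← hA, dotProduct_transpose_mulVec, dotProduct_comm, hA]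

theorem dotProduct_mulVec_self_eq_zero_of_transpose_eq_neg [CommRing R] [NoZeroDivisors R]
    [CharZero R] {S : Matrix m m R} (hS : Sᵀ = -S) (y : m → R) : y ⬝ᵥ (S *ᵥ y) = 0 := by
  rw [← CharZero.eq_neg_self_iff]
  calc y ⬝ᵥ (S *ᵥ y) = y ⬝ᵥ (Sᵀ *ᵥ y) := (dotProduct_transpose_mulVec S y y).symm
    _ = -(y ⬝ᵥ (S *ᵥ y)) := by rw [hS, neg_mulVec, dotProduct_neg]

theorem dotProduct_mulVec_one_add_mul_mulVec [CommRing R] [NoZeroDivisors R] [CharZero R]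
    [DecidableEq m] {S W : Matrix m m R} (hS : Sᵀ = -S) (hW : Wᵀ = W) (x : m → R) :
    x ⬝ᵥ (W *ᵥ (((1 + S) * W) *ᵥ x)) = (W *ᵥ x) ⬝ᵥ (W *ᵥ x) := by
  rw [dotProduct_mulVec_comm_of_transpose_eq hW, ← mulVec_mulVec, add_mulVec, one_mulVec,
    dotProduct_add, dotProduct_mulVec_self_eq_zero_of_transpose_eq_neg hS, add_zero]

variable [DecidableEq m]

theorem nonsing_inv_mul_mul_nonsing_inv [CommRing R] (A : Matrix m m R) : A⁻¹ * A * A⁻¹ = A⁻¹ := by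
  by_cases h : IsUnit A.det
  · rw [nonsing_inv_mul A h, one_mul]
  · rw [nonsing_inv_apply_not_isUnit A h, zero_mul, zero_mul]

theorem dotProduct_nonsing_inv_mulVec_self [CommRing R] {V : Matrix m m R} (hV : Vᵀ = V)
    (x : m → R) : x ⬝ᵥ (V⁻¹ *ᵥ x) = (V⁻¹ *ᵥ x) ⬝ᵥ (V *ᵥ (V⁻¹ *ᵥ x)) := by
  have hV' : V⁻¹ᵀ = V⁻¹ := by rw [transpose_nonsing_inv, hV]
  rw [← dotProduct_mulVec_comm_of_transpose_eq hV', mulVec_mulVec, mulVec_mulVec,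
    nonsing_inv_mul_mul_nonsing_inv]

theorem dotProduct_mulVec_le_l2_opNorm_mul (A : Matrix m m ℝ) (y : m → ℝ) :
    y ⬝ᵥ (A *ᵥ y) ≤ ‖A‖ * (y ⬝ᵥ y) := by
  set y' := WithLp.toLp 2 y
  have hy : y ⬝ᵥ y = ‖y'‖ ^ 2 := by
    rw [← real_inner_self_eq_norm_sq, EuclideanSpace.inner_toLp_toLp, star_trivial]
  calc y ⬝ᵥ (A *ᵥ y) = inner ℝ y' (WithLp.toLp 2 (A *ᵥ y)) := by
        rw [EuclideanSpace.inner_toLp_toLp, star_trivial, dotProduct_comm]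
    _ ≤ ‖y'‖ * ‖WithLp.toLp 2 (A *ᵥ y)‖ := real_inner_le_norm _ _
    _ ≤ ‖y'‖ * (‖A‖ * ‖y'‖) := by gcongr; exact A.l2_opNorm_mulVec y'
    _ = ‖A‖ * (y ⬝ᵥ y) := by rw [hy]; ring

end Matrix

theorem dissipativity_estimate_general
    (n : ℕ) (V S B : Matrix (Fin n) (Fin n) ℝ)
    (hVsym : Vᵀ = V) (hSskew : Sᵀ = -S)
    (hB : B = -((1 + S) * V⁻¹)) :
    ∀ x : Fin n → ℝ,
      x ⬝ᵥ (V⁻¹ *ᵥ (B *ᵥ x)) ≤ - (x ⬝ᵥ (V⁻¹ *ᵥ x)) / ‖V‖ := by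
  intro x
  have hVinv : V⁻¹ᵀ = V⁻¹ := by rw [transpose_nonsing_inv, hVsym]
  set y := V⁻¹ *ᵥ x
  have hdissipation : x ⬝ᵥ (V⁻¹ *ᵥ (B *ᵥ x)) = -(y ⬝ᵥ y) := by
    rw [hB, neg_mulVec, mulVec_neg, dotProduct_neg,
      dotProduct_mulVec_one_add_mul_mulVec hSskew hVinv]
  have hbound : x ⬝ᵥ (V⁻¹ *ᵥ x) ≤ (y ⬝ᵥ y) * ‖V‖ := by
    rw [dotProduct_nonsing_inv_mulVec_self hVsym, mul_comm]
    exact V.dotProduct_mulVec_le_l2_opNorm_mul y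
  rw [hdissipation, neg_div, neg_le_neg_iff]
  exact div_le_of_le_mul₀ (norm_nonneg V) (dotProduct_self_star_nonneg y) hbound

/-- for V symmetric positive definite, S skew-symmetric and
B = −(I+S)V⁻¹, one has ⟨x, Bx⟩_V ≤ −‖x‖_V²/‖V‖ for all x, where
⟨x,y⟩_V = ⟨x, V⁻¹y⟩ and ‖V‖ is the Euclidean operator norm. -/
theorem dissipativity_estimate
    (n : ℕ) (V S B : Matrix (Fin n) (Fin n) ℝ)
    (hV : V.PosDef) (hVsym : Vᵀ = V) (hSskew : Sᵀ = -S)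
    (hB : B = -((1 + S) * V⁻¹)) :
    ∀ x : Fin n → ℝ,
      x ⬝ᵥ (V⁻¹ *ᵥ (B *ᵥ x)) ≤ - (x ⬝ᵥ (V⁻¹ *ᵥ x)) / ‖V‖ :=
  dissipativity_estimate_general n V S B hVsym hSskew hB
end

section
/- Let V be symmetric positive definite, S skew-symmetric, B = −(I+S)V^{−1}. Then for all s ≥ 0, the operator norm of e^{Bs} with respect to the inner product ⟨x,y⟩_V = ⟨x, V^{−1}y⟩ satisfies ‖e^{Bs}‖_V ≤ e^{−s/‖V‖}. -/
/-!
Along `y t = exp (t • B) *ᵥ x` the energy `f t = y ⬝ᵥ V⁻¹ y` has derivative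
`2 (z ⬝ᵥ B y) = -2 (z ⬝ᵥ z)` with `z = V⁻¹ y`, since `z ⬝ᵥ S z = 0` for skew `S`. As
`f = z ⬝ᵥ V z ≤ ‖V‖ (z ⬝ᵥ z)`, this gives `f' ≤ -(2 / ‖V‖) f`, so `exp (2 t / ‖V‖) f t` is
antitone and `f s ≤ exp (-2 s / ‖V‖) f 0`; the estimate is its square root.
-/

open Matrix
open scoped Matrix.Norms.L2Operator

section

variable {ι : Type*} [Fintype ι]

theorem Matrix.dotProduct_mulVec_self_eq_zero_of_transpose_eq_neg_s15 {R : Type*} [CommRing R]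
    [NoZeroDivisors R] [CharZero R] {S : Matrix ι ι R} (hS : Sᵀ = -S) (z : ι → R) :
    z ⬝ᵥ (S *ᵥ z) = 0 := by
  have h : z ⬝ᵥ (S *ᵥ z) = -(z ⬝ᵥ (S *ᵥ z)) := by
    conv_lhs => rw [dotProduct_mulVec, ← mulVec_transpose, hS, neg_mulVec, neg_dotProduct,
      dotProduct_comm]
  exact self_eq_neg.mp h

theorem Matrix.dotProduct_mulVec_le_l2_opNorm_mul_s15 [DecidableEq ι] (A : Matrix ι ι ℝ)
    (z : ι → ℝ) : z ⬝ᵥ (A *ᵥ z) ≤ ‖A‖ * (z ⬝ᵥ z) := by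
  set w : EuclideanSpace ℝ ι := WithLp.toLp 2 z
  have hz : z ⬝ᵥ z = ‖w‖ ^ 2 := by
    rw [← real_inner_self_eq_norm_sq, EuclideanSpace.inner_eq_star_dotProduct]
    simp [w]
  calc z ⬝ᵥ (A *ᵥ z) = inner ℝ w ((EuclideanSpace.equiv ι ℝ).symm (A *ᵥ w)) := by
        rw [EuclideanSpace.inner_eq_star_dotProduct]
        simp [w, dotProduct_comm]
    _ ≤ ‖w‖ * (‖A‖ * ‖w‖) :=
        (real_inner_le_norm _ _).trans (by gcongr; exact A.l2_opNorm_mulVec w)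
    _ = ‖A‖ * (z ⬝ᵥ z) := by rw [hz]; ring

theorem Matrix.inv_mulVec_dotProduct_mulVec_le [DecidableEq ι] {V S B : Matrix ι ι ℝ}
    (hV : IsUnit V.det) (hS : Sᵀ = -S) (hB : B = -((1 + S) * V⁻¹)) (y : ι → ℝ) :
    (V⁻¹ *ᵥ y) ⬝ᵥ (B *ᵥ y) ≤ -‖V‖⁻¹ * (y ⬝ᵥ (V⁻¹ *ᵥ y)) := by
  subst hB
  set z := V⁻¹ *ᵥ y
  have hy : y = V *ᵥ z := by rw [mulVec_mulVec, mul_nonsing_inv _ hV, one_mulVec]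
  have hq : y ⬝ᵥ z ≤ ‖V‖ * (z ⬝ᵥ z) := by
    rw [hy, dotProduct_comm]
    exact V.dotProduct_mulVec_le_l2_opNorm_mul_s15 z
  have hz : 0 ≤ z ⬝ᵥ z := by simpa using dotProduct_self_star_nonneg z
  rw [neg_mulVec, ← mulVec_mulVec, add_mulVec, one_mulVec, dotProduct_neg, dotProduct_add,
    dotProduct_mulVec_self_eq_zero_of_transpose_eq_neg_s15 hS, add_zero, neg_mul, neg_le_neg_iff]
  rcases (norm_nonneg V).eq_or_lt with hV0 | hV0
  · simpa [← hV0] using hz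
  · rw [inv_mul_le_iff₀ hV0]
    exact hq

theorem HasDerivAt.dotProduct_mulVec_self {W : Matrix ι ι ℝ} (hW : Wᵀ = W)
    {y : ℝ → ι → ℝ} {y' : ι → ℝ} {t : ℝ} (hy : HasDerivAt y y' t) :
    HasDerivAt (fun u => y u ⬝ᵥ (W *ᵥ y u)) (2 * ((W *ᵥ y t) ⬝ᵥ y')) t := by
  let Q := ((dotProductBilin ℝ ℝ).compl₂ W.mulVecLin).toContinuousBilinearMap
  refine (Q.hasDerivAt_of_bilinear (fun _ => hy) (fun _ => hy)).congr_deriv ?_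
  change y t ⬝ᵥ (W *ᵥ y') + y' ⬝ᵥ (W *ᵥ y t) = _
  rw [dotProduct_mulVec, ← mulVec_transpose, hW, dotProduct_comm y']
  ring

theorem hasDerivAt_exp_smul_mulVec [DecidableEq ι] (B : Matrix ι ι ℝ) (x : ι → ℝ) (t : ℝ) :
    HasDerivAt (fun u : ℝ => NormedSpace.exp (u • B) *ᵥ x)
      (B *ᵥ (NormedSpace.exp (t • B) *ᵥ x)) t := by
  let L := ((mulVecBilin ℝ ℝ : Matrix ι ι ℝ →ₗ[ℝ] _ →ₗ[ℝ] _).flip x).toContinuousLinearMap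
  have := L.hasFDerivAt.comp_hasDerivAt t (hasDerivAt_exp_smul_const' B t)
  simpa [L, mulVec_mulVec, Function.comp_def] using this

end

theorem le_exp_neg_mul_mul_of_hasDerivAt_le {f f' : ℝ → ℝ} {c : ℝ}
    (hf : ∀ t, HasDerivAt f (f' t) t) (hf' : ∀ t, f' t ≤ -c * f t) {s : ℝ} (hs : 0 ≤ s) :
    f s ≤ Real.exp (-c * s) * f 0 := by
  have hg : ∀ t, HasDerivAt (fun u => Real.exp (c * u) * f u)
      (Real.exp (c * t) * (c * f t + f' t)) t := fun t => by
    have he : HasDerivAt (fun u => Real.exp (c * u)) (Real.exp (c * t) * c) t := by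
      simpa using ((hasDerivAt_id' t).const_mul c).exp
    exact (he.mul (hf t)).congr_deriv (by ring)
  have hanti : Antitone fun u => Real.exp (c * u) * f u :=
    antitone_of_deriv_nonpos (fun t => (hg t).differentiableAt) fun t => by
      rw [(hg t).deriv]
      exact mul_nonpos_of_nonneg_of_nonpos (Real.exp_pos _).le (by linarith [hf' t])
  have h := hanti hs
  simp only [mul_zero, Real.exp_zero, one_mul] at h
  rw [neg_mul, Real.exp_neg, inv_mul_eq_div, le_div_iff₀ (Real.exp_pos _), mul_comm]
  exact h

theorem exp_contraction_estimate_general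
    (n : ℕ) (V S B : Matrix (Fin n) (Fin n) ℝ)
    (hV : V.PosDef) (hSskew : Sᵀ = -S)
    (hB : B = -((1 + S) * V⁻¹)) :
    ∀ s : ℝ, 0 ≤ s → ∀ x : Fin n → ℝ,
      Real.sqrt ((NormedSpace.exp (s • B) *ᵥ x) ⬝ᵥ
          (V⁻¹ *ᵥ (NormedSpace.exp (s • B) *ᵥ x))) ≤
        Real.exp (-s / ‖V‖) * Real.sqrt (x ⬝ᵥ (V⁻¹ *ᵥ x)) := by
  intro s hs x
  have hVinv : (V⁻¹)ᵀ = V⁻¹ := by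
    simpa [IsHermitian, conjTranspose_eq_transpose_of_trivial] using hV.inv.isHermitian
  have hdecay := le_exp_neg_mul_mul_of_hasDerivAt_le (c := 2 * ‖V‖⁻¹)
    (fun t => (hasDerivAt_exp_smul_mulVec B x t).dotProduct_mulVec_self hVinv)
    (fun t => by
      linarith [inv_mulVec_dotProduct_mulVec_le hV.det_pos.ne'.isUnit hSskew hB
        (NormedSpace.exp (t • B) *ᵥ x)]) hs
  simp only [zero_smul, NormedSpace.exp_zero, one_mulVec] at hdecay
  calc _ ≤ √(Real.exp (-(2 * ‖V‖⁻¹) * s) * (x ⬝ᵥ (V⁻¹ *ᵥ x))) := Real.sqrt_le_sqrt hdecay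
    _ = Real.exp (-s / ‖V‖) * √(x ⬝ᵥ (V⁻¹ *ᵥ x)) := by
      rw [Real.sqrt_mul (Real.exp_pos _).le, ← Real.exp_half]
      ring_nf

/-- for V symmetric positive definite, S skew-symmetric and
B = −(I+S)V⁻¹, the matrix exponential satisfies ‖e^{Bs}x‖_V ≤ e^{−s/‖V‖}‖x‖_V for
all s ≥ 0 and all x, where ‖x‖_V² = ⟨x, V⁻¹x⟩ and ‖V‖ is the Euclidean operator
norm; i.e. the ‖·‖_V-operator norm of e^{Bs} is at most e^{−s/‖V‖}. -/
theorem exp_contraction_estimate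
    (n : ℕ) (V S B : Matrix (Fin n) (Fin n) ℝ)
    (hV : V.PosDef) (hVsym : Vᵀ = V) (hSskew : Sᵀ = -S)
    (hB : B = -((1 + S) * V⁻¹)) :
    ∀ s : ℝ, 0 ≤ s → ∀ x : Fin n → ℝ,
      Real.sqrt ((NormedSpace.exp (s • B) *ᵥ x) ⬝ᵥ
          (V⁻¹ *ᵥ (NormedSpace.exp (s • B) *ᵥ x))) ≤
        Real.exp (-s / ‖V‖) * Real.sqrt (x ⬝ᵥ (V⁻¹ *ᵥ x)) :=
  exp_contraction_estimate_general n V S B hV hSskew hB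
end

section
/- Let V be symmetric positive definite, S skew-symmetric, B = −(I+S)V^{−1}, and set C₁ = ‖V^{−1/2}(I+S)V^{−1}(I−S)V^{1/2}‖, C₂ = ‖V^{−1/2}(I+S)V^{−1/2}‖²·‖V‖. For 0 < h < 2/C₂, let R be the positive definite solution of R = 2hσ²I + (I+hB)R(I+hB'). Then R ⪯ σ²·((2 − h(C₂−C₁))/(2 − hC₂))·V in the Loewner order. -/
/-!
Put `T = W⁻¹ R W⁻¹`, `M = W⁻¹ (1 + S) W⁻¹` and `P = W⁻¹ W⁻¹ = V⁻¹`. Skew-symmetry of `S` gives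
`M + Mᵀ = 2P`, and the discrete Lyapunov equation becomes `M T + T Mᵀ = 2σ² P + h M T Mᵀ`.
If `X` is symmetric with top eigenpair `(ν, w)` and `M X + X Mᵀ ≤ γ P`, the quadratic form at `w`
reads `2ν wᵀPw ≤ γ wᵀPw`, so `X ≤ γ/2`. Both constants satisfy `M Mᵀ ≤ C P`, hence
`M T Mᵀ ≤ μ C P` for `μ = λ_max(T)`. With `X = T` and `C = C₂` this gives `μ ≤ 2σ² / (2 - h C₂)`;
with `X = T - σ²`, for which the `2σ² P` term cancels, and `C = C₁` it gives
`T ≤ σ² + h C₁ μ / 2`, which is the claimed bound on `T`, i.e. on `R = W T W`.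
-/

open Matrix
open scoped Matrix.Norms.L2Operator MatrixOrder

namespace Matrix

variable {ι : Type*} [Fintype ι]

theorem dotProduct_mulVec_le_of_le {A B : Matrix ι ι ℝ} (h : A ≤ B) (x : ι → ℝ) :
    x ⬝ᵥ (A *ᵥ x) ≤ x ⬝ᵥ (B *ᵥ x) := by
  simpa [sub_mulVec] using (le_iff.mp h).dotProduct_mulVec_nonneg x

theorem mul_mul_transpose_le_mul_mul_transpose {A B : Matrix ι ι ℝ} (h : A ≤ B)
    (C : Matrix ι ι ℝ) : C * A * Cᵀ ≤ C * B * Cᵀ := by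
  simpa [star_eq_conjTranspose] using star_right_conjugate_le_conjugate h C

theorem two_mul_le_of_lyapunov_le {M P X : Matrix ι ι ℝ} (hMP : M + Mᵀ = (2 : ℝ) • P)
    (hX : X.IsHermitian) {ν : ℝ} {w : ι → ℝ} (hw : X *ᵥ w = ν • w) (hPw : 0 < w ⬝ᵥ (P *ᵥ w))
    {γ : ℝ} (hle : M * X + X * Mᵀ ≤ γ • P) : 2 * ν ≤ γ := by
  have hMX : w ⬝ᵥ ((M * X) *ᵥ w) = ν * (w ⬝ᵥ (M *ᵥ w)) := by
    rw [← mulVec_mulVec, hw, mulVec_smul, dotProduct_smul, smul_eq_mul]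
  have hXM : w ⬝ᵥ ((X * Mᵀ) *ᵥ w) = ν * (w ⬝ᵥ (Mᵀ *ᵥ w)) := by
    rw [← mulVec_mulVec, dotProduct_mulVec, ← mulVec_transpose, show Xᵀ = X by simpa using hX.eq,
      hw, smul_dotProduct, smul_eq_mul]
  have hM := congrArg (fun A => w ⬝ᵥ (A *ᵥ w)) hMP
  simp only [add_mulVec, dotProduct_add, smul_mulVec, dotProduct_smul, smul_eq_mul] at hM
  have hquad := dotProduct_mulVec_le_of_le hle w
  rw [add_mulVec, dotProduct_add, hMX, hXM, smul_mulVec, dotProduct_smul, smul_eq_mul] at hquad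
  exact le_of_mul_le_mul_right (by linear_combination hquad - ν * hM) hPw

variable [DecidableEq ι]

theorem IsHermitian.le_smul_one_of_forall_mem_spectrum_le {A : Matrix ι ι ℝ}
    (hA : A.IsHermitian) {r : ℝ} (h : ∀ x ∈ spectrum ℝ A, x ≤ r) : A ≤ r • 1 := by
  rw [← Algebra.algebraMap_eq_smul_one]
  exact le_algebraMap_of_spectrum_le h hA.isSelfAdjoint

theorem IsHermitian.exists_eigenvector_le_smul_one [Nonempty ι] {A : Matrix ι ι ℝ}
    (hA : A.IsHermitian) : ∃ (ν : ℝ) (w : ι → ℝ), w ≠ 0 ∧ A *ᵥ w = ν • w ∧ A ≤ ν • 1 := by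
  obtain ⟨i, -, hi⟩ := Finset.univ.exists_max_image hA.eigenvalues Finset.univ_nonempty
  refine ⟨_, _, ?_, hA.mulVec_eigenvectorBasis i, hA.le_smul_one_of_forall_mem_spectrum_le ?_⟩
  · simpa using hA.eigenvectorBasis.orthonormal.ne_zero i
  · rw [hA.spectrum_real_eq_range_eigenvalues]
    rintro _ ⟨j, rfl⟩
    exact hi j (Finset.mem_univ j)

theorem le_l2_opNorm_of_mem_spectrum {A : Matrix ι ι ℝ} {x : ℝ} (hx : x ∈ spectrum ℝ A) :
    x ≤ ‖A‖ := by
  have : Nonempty ι := by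
    by_contra! h
    simp [spectrum.of_subsingleton] at hx
  exact (Real.le_norm_self x).trans (spectrum.norm_le_norm_of_mem hx)

theorem IsHermitian.le_l2_opNorm_conj_smul_one {K : Matrix ι ι ℝ} (hK : K.IsHermitian)
    {P : Matrix ι ι ℝ} (hP : IsUnit P) : K ≤ ‖P⁻¹ * K * P‖ • 1 := by
  refine hK.le_smul_one_of_forall_mem_spectrum_le fun x hx => le_l2_opNorm_of_mem_spectrum ?_
  have hconj : spectrum ℝ (P⁻¹ * K * P) = spectrum ℝ K := by
    simpa [coe_units_inv] using spectrum.units_conjugate (R := ℝ) (a := K) (u := hP.unit⁻¹)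
  rwa [hconj]

theorem IsHermitian.le_l2_opNorm_smul_one {A : Matrix ι ι ℝ} (hA : A.IsHermitian) :
    A ≤ ‖A‖ • 1 := by
  simpa using hA.le_l2_opNorm_conj_smul_one isUnit_one

theorem mul_transpose_le_l2_opNorm_sq_smul_one (A : Matrix ι ι ℝ) :
    A * Aᵀ ≤ ‖A‖ ^ 2 • 1 := by
  have hA : (A * Aᵀ).IsHermitian := by simpa using isHermitian_mul_conjTranspose_self A
  have hnorm : ‖A * Aᵀ‖ = ‖A‖ ^ 2 := by
    have := l2_opNorm_conjTranspose_mul_self Aᴴ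
    rw [conjTranspose_conjTranspose, l2_opNorm_conjTranspose] at this
    simpa [sq] using this
  simpa [hnorm] using hA.le_l2_opNorm_smul_one

theorem mul_mul_le_smul_mul_of_le_smul_one {G A : Matrix ι ι ℝ} (hG : Gᵀ = G) {c : ℝ}
    (h : A ≤ c • 1) : G * A * G ≤ c • (G * G) := by
  simpa [hG] using mul_mul_transpose_le_mul_mul_transpose h G

theorem mul_transpose_le_smul_inv_mul_inv (A : Matrix ι ι ℝ) {W : Matrix ι ι ℝ} (hW : Wᵀ = W)
    (hWu : IsUnit W) : A * Aᵀ ≤ (‖A‖ ^ 2 * ‖W * W‖) • (W⁻¹ * W⁻¹) := by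
  have hWW : (W * W).IsHermitian := by simpa [hW] using isHermitian_conjTranspose_mul_self W
  have hWdet : IsUnit W.det := (isUnit_iff_isUnit_det W).mp hWu
  have hone := mul_mul_le_smul_mul_of_le_smul_one (G := W⁻¹) (by rw [transpose_nonsing_inv, hW])
    hWW.le_l2_opNorm_smul_one
  rw [nonsing_inv_mul_cancel_left _ _ hWdet, mul_nonsing_inv _ hWdet] at hone
  calc A * Aᵀ ≤ ‖A‖ ^ 2 • 1 := mul_transpose_le_l2_opNorm_sq_smul_one A
    _ ≤ ‖A‖ ^ 2 • (‖W * W‖ • (W⁻¹ * W⁻¹)) := smul_le_smul_of_nonneg_left hone (sq_nonneg _)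
    _ = (‖A‖ ^ 2 * ‖W * W‖) • (W⁻¹ * W⁻¹) := smul_smul _ _ _

theorem inv_mul_mul_inv_mul_transpose_le_smul_inv_mul_inv (N : Matrix ι ι ℝ)
    {W : Matrix ι ι ℝ} (hW : Wᵀ = W) (hWu : IsUnit W) :
    W⁻¹ * N * W⁻¹ * (W⁻¹ * N * W⁻¹)ᵀ
      ≤ ‖W⁻¹ * N * (W⁻¹ * W⁻¹) * Nᵀ * W‖ • (W⁻¹ * W⁻¹) := by
  have hG : (W⁻¹)ᵀ = W⁻¹ := by rw [transpose_nonsing_inv, hW]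
  have hK : (N * (W⁻¹ * W⁻¹) * Nᵀ).IsHermitian := by
    simpa [hG, Matrix.mul_assoc] using isHermitian_mul_conjTranspose_self (N * W⁻¹)
  simpa [hG, Matrix.mul_assoc] using
    mul_mul_le_smul_mul_of_le_smul_one hG (hK.le_l2_opNorm_conj_smul_one hWu)

theorem le_smul_mul_self_of_inv_mul_mul_inv_le {W R : Matrix ι ι ℝ} (hW : Wᵀ = W)
    (hWu : IsUnit W) {c : ℝ} (h : W⁻¹ * R * W⁻¹ ≤ c • 1) : R ≤ c • (W * W) := by
  have hWdet : IsUnit W.det := (isUnit_iff_isUnit_det W).mp hWu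
  simpa [Matrix.mul_assoc, nonsing_inv_mul_cancel_right _ _ hWdet,
    mul_nonsing_inv_cancel_left _ _ hWdet] using mul_mul_le_smul_mul_of_le_smul_one hW h

theorem le_smul_one_of_lyapunov_le {M P X : Matrix ι ι ℝ} (hMP : M + Mᵀ = (2 : ℝ) • P)
    (hP : P.PosDef) (hX : X.IsHermitian) {γ : ℝ} (hle : M * X + X * Mᵀ ≤ γ • P) :
    X ≤ (γ / 2) • 1 := by
  rcases isEmpty_or_nonempty ι with _ | _
  · exact (Subsingleton.elim _ _).le
  obtain ⟨ν, w, hw0, hw, hXν⟩ := hX.exists_eigenvector_le_smul_one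
  have hν := two_mul_le_of_lyapunov_le hMP hX hw (by simpa using hP.dotProduct_mulVec_pos hw0) hle
  exact hXν.trans (smul_le_smul_of_nonneg_right (by linarith) PosSemidef.one.nonneg)

theorem lyapunov_le_of_le_smul_one {M P T X : Matrix ι ι ℝ} {α h μ C : ℝ}
    (hL : M * X + X * Mᵀ = α • P + h • (M * T * Mᵀ)) (hh : 0 ≤ h) (hμ : 0 ≤ μ)
    (hT : T ≤ μ • 1) (hMM : M * Mᵀ ≤ C • P) : M * X + X * Mᵀ ≤ (α + h * μ * C) • P := by
  have hMTM : M * T * Mᵀ ≤ (μ * C) • P :=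
    calc M * T * Mᵀ ≤ M * (μ • 1) * Mᵀ := mul_mul_transpose_le_mul_mul_transpose hT M
      _ = μ • (M * Mᵀ) := by simp
      _ ≤ μ • (C • P) := smul_le_smul_of_nonneg_left hMM hμ
      _ = (μ * C) • P := smul_smul μ C P
  calc M * X + X * Mᵀ = α • P + h • (M * T * Mᵀ) := hL
    _ ≤ α • P + h • ((μ * C) • P) := add_le_add_right (smul_le_smul_of_nonneg_left hMTM hh) _
    _ = (α + h * μ * C) • P := by module

theorem le_smul_one_of_lyapunov_eq {M P T : Matrix ι ι ℝ} {σ h C₁ C₂ : ℝ}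
    (hMP : M + Mᵀ = (2 : ℝ) • P) (hP : P.PosDef) (hT : T.PosSemidef)
    (hL : M * T + T * Mᵀ = (2 * σ ^ 2) • P + h • (M * T * Mᵀ))
    (hMM₁ : M * Mᵀ ≤ C₁ • P) (hMM₂ : M * Mᵀ ≤ C₂ • P) (hC₁ : 0 ≤ C₁) (hh : 0 < h)
    (hhC₂ : h * C₂ < 2) :
    T ≤ (σ ^ 2 * ((2 - h * (C₂ - C₁)) / (2 - h * C₂))) • 1 := by
  rcases isEmpty_or_nonempty ι with _ | _
  · exact (Subsingleton.elim _ _).le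
  obtain ⟨μ, u, hu0, hu, hTμ⟩ := hT.isHermitian.exists_eigenvector_le_smul_one
  have hμ : 0 ≤ μ := by
    have := hT.dotProduct_mulVec_nonneg u
    rw [hu, star_trivial, dotProduct_smul, smul_eq_mul] at this
    exact nonneg_of_mul_nonneg_left this (by simpa using dotProduct_star_self_pos_iff.mpr hu0)
  have hμle : μ * (2 - h * C₂) ≤ 2 * σ ^ 2 := by
    have := two_mul_le_of_lyapunov_le hMP hT.isHermitian hu
      (by simpa using hP.dotProduct_mulVec_pos hu0)
      (lyapunov_le_of_le_smul_one hL hh.le hμ hTμ hMM₂)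
    linarith
  have hshift : M * (T - σ ^ 2 • 1) + (T - σ ^ 2 • 1) * Mᵀ = (0 : ℝ) • P + h • (M * T * Mᵀ) := by
    simp only [Matrix.mul_sub, Matrix.sub_mul, Matrix.mul_smul, Matrix.smul_mul, Matrix.mul_one,
      Matrix.one_mul]
    linear_combination (norm := module) hL - σ ^ 2 • hMP
  have hTσ := le_smul_one_of_lyapunov_le hMP hP (hT.isHermitian.sub (isHermitian_one.smul (.all _)))
    (lyapunov_le_of_le_smul_one hshift hh.le hμ hTμ hMM₁)
  have hc : (0 + h * μ * C₁) / 2 + σ ^ 2 ≤ σ ^ 2 * ((2 - h * (C₂ - C₁)) / (2 - h * C₂)) := by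
    rw [mul_div_assoc', le_div_iff₀ (by linarith)]
    linarith [mul_le_mul_of_nonneg_left hμle (mul_nonneg hh.le hC₁)]
  calc T = (T - σ ^ 2 • 1) + σ ^ 2 • 1 := (sub_add_cancel _ _).symm
    _ ≤ ((0 + h * μ * C₁) / 2) • 1 + σ ^ 2 • 1 := add_le_add_left hTσ _
    _ = ((0 + h * μ * C₁) / 2 + σ ^ 2) • 1 := (add_smul _ _ _).symm
    _ ≤ _ := smul_le_smul_of_nonneg_right hc PosSemidef.one.nonneg

theorem neg_lyapunov_eq_of_discrete_lyapunov {B Q R : Matrix ι ι ℝ} {c h : ℝ} (hh : h ≠ 0)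
    (hR : R = (h * c) • Q + (1 + h • B) * R * (1 + h • B)ᵀ) :
    -(B * R + R * Bᵀ) = c • Q + h • (B * R * Bᵀ) := by
  have hexpand : (1 + h • B) * R * (1 + h • B)ᵀ
      = R + h • (B * R + R * Bᵀ) + (h * h) • (B * R * Bᵀ) := by
    simp only [transpose_add, transpose_one, transpose_smul, Matrix.add_mul, Matrix.mul_add,
      Matrix.one_mul, Matrix.mul_one, Matrix.smul_mul, Matrix.mul_smul]
    module
  rw [hexpand] at hR
  have : h • (-(B * R + R * Bᵀ) - (c • Q + h • (B * R * Bᵀ))) = 0 := by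
    linear_combination (norm := module) hR
  exact sub_eq_zero.mp ((smul_eq_zero.mp this).resolve_left hh)

theorem lyapunov_conj_eq {G S B R : Matrix ι ι ℝ} {c h : ℝ} (hG : Gᵀ = G) (hS : Sᵀ = -S)
    (hB : B = -((1 + S) * (G * G))) (hL : -(B * R + R * Bᵀ) = c • 1 + h • (B * R * Bᵀ)) :
    G * (1 + S) * G * (G * R * G) + G * R * G * (G * (1 + S) * G)ᵀ
      = c • (G * G) + h • (G * (1 + S) * G * (G * R * G) * (G * (1 + S) * G)ᵀ) := by
  subst hB
  have := congrArg (G * · * G) hL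
  simp only [transpose_neg, transpose_mul, transpose_add, transpose_one, hG, hS] at this ⊢
  simp only [Matrix.mul_add, Matrix.add_mul, Matrix.mul_neg, Matrix.neg_mul, neg_neg,
    Matrix.mul_smul, Matrix.smul_mul, Matrix.mul_one, Matrix.one_mul, Matrix.mul_assoc] at this ⊢
  linear_combination (norm := module) this

theorem mul_one_add_mul_add_transpose {G S : Matrix ι ι ℝ} (hG : Gᵀ = G) (hS : Sᵀ = -S) :
    G * (1 + S) * G + (G * (1 + S) * G)ᵀ = (2 : ℝ) • (G * G) := by
  simp only [transpose_mul, transpose_add, hG, hS, Matrix.mul_add, Matrix.add_mul, Matrix.mul_neg,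
    Matrix.neg_mul, Matrix.mul_one, Matrix.mul_assoc]
  module

end Matrix

theorem lyapunov_solution_upper_bound_general
    (n : ℕ) (V S B R : Matrix (Fin n) (Fin n) ℝ)
    (hSskew : Sᵀ = -S)
    (hB : B = -((1 + S) * V⁻¹))
    (W : Matrix (Fin n) (Fin n) ℝ) (hW : W.PosDef) (hWsq : W * W = V)
    (C₁ C₂ : ℝ)
    (hC₁ : C₁ = ‖W⁻¹ * (1 + S) * V⁻¹ * (1 - S) * W‖)
    (hC₂ : C₂ = ‖W⁻¹ * (1 + S) * W⁻¹‖ ^ 2 * ‖V‖)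
    (h σ : ℝ) (hh0 : 0 < h) (hh : h < 2 / C₂)
    (hR : R.PosDef)
    (hLyap : R = (2 * h * σ ^ 2) • (1 : Matrix (Fin n) (Fin n) ℝ)
        + (1 + h • B) * R * (1 + h • B)ᵀ) :
    ((σ ^ 2 * ((2 - h * (C₂ - C₁)) / (2 - h * C₂))) • V - R).PosSemidef := by
  have hWs : Wᵀ = W := by simpa using hW.isHermitian.eq
  have hWu : IsUnit W := hW.isUnit
  have hGs : (W⁻¹)ᵀ = W⁻¹ := by rw [transpose_nonsing_inv, hWs]
  have hVinv : V⁻¹ = W⁻¹ * W⁻¹ := by rw [← hWsq, Matrix.mul_inv_rev]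
  have hC₂pos : 0 < C₂ := (div_pos_iff_of_pos_left two_pos).mp (hh0.trans hh)
  have hP : (W⁻¹ * W⁻¹).PosDef := by
    simpa [hGs] using PosDef.one.conjTranspose_mul_mul_same
      (mulVec_injective_of_isUnit (isUnit_nonsing_inv_iff.mpr hWu))
  have hT : (W⁻¹ * R * W⁻¹).PosSemidef := by
    simpa [hGs] using hR.posSemidef.mul_mul_conjTranspose_same W⁻¹
  have hL := lyapunov_conj_eq hGs hSskew (hVinv ▸ hB) (neg_lyapunov_eq_of_discrete_lyapunov
    hh0.ne' (c := 2 * σ ^ 2) (by rwa [mul_left_comm, ← mul_assoc]))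
  have hMM₁ := inv_mul_mul_inv_mul_transpose_le_smul_inv_mul_inv (1 + S) hWs hWu
  rw [hVinv] at hC₁
  rw [transpose_add, transpose_one, hSskew, ← sub_eq_add_neg, ← hC₁] at hMM₁
  have hMM₂ := mul_transpose_le_smul_inv_mul_inv (W⁻¹ * (1 + S) * W⁻¹) hWs hWu
  rw [hWsq, ← hC₂] at hMM₂
  have hTc := le_smul_one_of_lyapunov_eq (mul_one_add_mul_add_transpose hGs hSskew) hP hT hL
    hMM₁ hMM₂ (hC₁ ▸ norm_nonneg _) hh0 (by rwa [lt_div_iff₀ hC₂pos] at hh)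
  rw [← le_iff, ← hWsq]
  exact le_smul_mul_self_of_inv_mul_mul_inv_le hWs hWu hTc

/-- with C₁ = ‖V^{−1/2}(I+S)V⁻¹(I−S)V^{1/2}‖ and
C₂ = ‖V^{−1/2}(I+S)V^{−1/2}‖²‖V‖ (W denotes the positive definite square root
V^{1/2}, so W⁻¹ = V^{−1/2}), if 0 < h < 2/C₂ and R is the positive definite
solution of the discrete Lyapunov equation, then
R ⪯ σ²·((2 − h(C₂−C₁))/(2 − hC₂))·V in the Loewner order. -/
theorem lyapunov_solution_upper_bound
    (n : ℕ) (V S B R : Matrix (Fin n) (Fin n) ℝ)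
    (hV : V.PosDef) (hVsym : Vᵀ = V) (hSskew : Sᵀ = -S)
    (hB : B = -((1 + S) * V⁻¹))
    (W : Matrix (Fin n) (Fin n) ℝ) (hW : W.PosDef) (hWsq : W * W = V)
    (C₁ C₂ : ℝ)
    (hC₁ : C₁ = ‖W⁻¹ * (1 + S) * V⁻¹ * (1 - S) * W‖)
    (hC₂ : C₂ = ‖W⁻¹ * (1 + S) * W⁻¹‖ ^ 2 * ‖V‖)
    (h σ : ℝ) (hh0 : 0 < h) (hh : h < 2 / C₂) (hσ : 0 < σ)
    (hR : R.PosDef)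
    (hLyap : R = (2 * h * σ ^ 2) • (1 : Matrix (Fin n) (Fin n) ℝ)
        + (1 + h • B) * R * (1 + h • B)ᵀ) :
    ((σ ^ 2 * ((2 - h * (C₂ - C₁)) / (2 - h * C₂))) • V - R).PosSemidef :=
  lyapunov_solution_upper_bound_general n V S B R hSskew hB W hW hWsq C₁ C₂ hC₁ hC₂ h σ hh0 hh hR
    hLyap
end
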